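/- arXiv:2007.11249 — 4 statements merged into one kernel-verified Lean document; each statement's English description precedes it below -/
import Mathlib

section
/- For every permutation σ of [n], the number of inversions of σ equals the number of excedances of σ plus the number of crossings of σ plus twice the number of nestings of σ. -/
open Finset

section Aux

variable {n : ℕ}

private lemma sum2_congr {F G : Fin n → Fin n → ℕ} (h : ∀ i j, F i j = G i j) :
    (∑ i, ∑ j, F i j) = ∑ i, ∑ j, G i j :=
  Finset.sum_congr rfl fun i _ => Finset.sum_congr rfl fun j _ => h i j

private lemma sum2_add (F G : Fin n → Fin n → ℕ) :
    (∑ i, ∑ j, (F i j + G i j)) = (∑ i, ∑ j, F i j) + ∑ i, ∑ j, G i j := by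
  simp [Finset.sum_add_distrib]

private lemma sum_gate (A : Prop) [Decidable A] (P : Fin n → Prop) [DecidablePred P] :
    (∑ y : Fin n, if A ∧ P y then (1:ℕ) else 0)
      = if A then (∑ y : Fin n, if P y then (1:ℕ) else 0) else 0 := by
  by_cases h : A <;> simp [h]

private lemma sum_diag (i : Fin n) (P : Prop) [Decidable P] :
    (∑ j : Fin n, if j = i ∧ P then (1:ℕ) else 0) = if P then 1 else 0 := by
  by_cases h : P <;> simp [h]

private lemma bal_le (σ : Equiv.Perm (Fin n)) (k : Fin n) :
    (∑ y : Fin n, if σ y ≤ k ∧ k < y then (1:ℕ) else 0)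
      = ∑ y : Fin n, if y ≤ k ∧ k < σ y then (1:ℕ) else 0 := by
  have h0 : (∑ y : Fin n, if σ y ≤ k then (1:ℕ) else 0)
      = ∑ y : Fin n, if y ≤ k then (1:ℕ) else 0 :=
    Equiv.sum_comp σ (fun y => if y ≤ k then (1:ℕ) else 0)
  have hA : (∑ y : Fin n, if σ y ≤ k then (1:ℕ) else 0)
      = (∑ y : Fin n, if σ y ≤ k ∧ y ≤ k then (1:ℕ) else 0)
        + ∑ y : Fin n, if σ y ≤ k ∧ k < y then (1:ℕ) else 0 := by
    rw [← Finset.sum_add_distrib]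
    refine Finset.sum_congr rfl fun y _ => ?_
    simp only [Fin.lt_def, Fin.le_def]
    split_ifs <;> omega
  have hB : (∑ y : Fin n, if y ≤ k then (1:ℕ) else 0)
      = (∑ y : Fin n, if σ y ≤ k ∧ y ≤ k then (1:ℕ) else 0)
        + ∑ y : Fin n, if y ≤ k ∧ k < σ y then (1:ℕ) else 0 := by
    rw [← Finset.sum_add_distrib]
    refine Finset.sum_congr rfl fun y _ => ?_
    simp only [Fin.lt_def, Fin.le_def]
    split_ifs <;> omega
  omega

private lemma bal_lt (σ : Equiv.Perm (Fin n)) (v : Fin n) :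
    (∑ y : Fin n, if σ y < v ∧ v ≤ y then (1:ℕ) else 0)
      = ∑ y : Fin n, if y < v ∧ v ≤ σ y then (1:ℕ) else 0 := by
  have h0 : (∑ y : Fin n, if σ y < v then (1:ℕ) else 0)
      = ∑ y : Fin n, if y < v then (1:ℕ) else 0 :=
    Equiv.sum_comp σ (fun y => if y < v then (1:ℕ) else 0)
  have hA : (∑ y : Fin n, if σ y < v then (1:ℕ) else 0)
      = (∑ y : Fin n, if σ y < v ∧ y < v then (1:ℕ) else 0)
        + ∑ y : Fin n, if σ y < v ∧ v ≤ y then (1:ℕ) else 0 := by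
    rw [← Finset.sum_add_distrib]
    refine Finset.sum_congr rfl fun y _ => ?_
    simp only [Fin.lt_def, Fin.le_def]
    split_ifs <;> omega
  have hB : (∑ y : Fin n, if y < v then (1:ℕ) else 0)
      = (∑ y : Fin n, if σ y < v ∧ y < v then (1:ℕ) else 0)
        + ∑ y : Fin n, if y < v ∧ v ≤ σ y then (1:ℕ) else 0 := by
    rw [← Finset.sum_add_distrib]
    refine Finset.sum_congr rfl fun y _ => ?_
    simp only [Fin.lt_def, Fin.le_def]
    split_ifs <;> omega
  omega

end Aux

/-- For every permutation `σ` of `[n]`, the number of inversions equals the number of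
excedances plus the number of crossings plus twice the number of nestings. -/
theorem inv_eq_exc_add_crs_add_two_nes (n : ℕ) (σ : Equiv.Perm (Fin n)) :
    (univ.filter fun p : Fin n × Fin n => p.1 < p.2 ∧ σ p.2 < σ p.1).card =
      (univ.filter fun i : Fin n => i < σ i).card +
        (univ.filter fun p : Fin n × Fin n =>
          (p.1 < p.2 ∧ p.2 < σ p.1 ∧ σ p.1 < σ p.2) ∨
            (σ p.1 < σ p.2 ∧ σ p.2 ≤ p.1 ∧ p.1 < p.2)).card +
        2 * (univ.filter fun p : Fin n × Fin n =>
          (p.1 < p.2 ∧ p.2 < σ p.2 ∧ σ p.2 < σ p.1) ∨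
            (σ p.2 < σ p.1 ∧ σ p.1 ≤ p.1 ∧ p.1 < p.2)).card := by
  classical
  -- helper facts for pointwise reasoning with injectivity
  have inj1 : ∀ i j : Fin n, ((σ i : ℕ) = (σ j : ℕ)) → (i : ℕ) = (j : ℕ) := by
    intro i j h
    exact congrArg Fin.val (σ.injective (Fin.val_injective h))
  have inj2 : ∀ i j : Fin n, ((i : ℕ) = (j : ℕ)) → (σ i : ℕ) = (σ j : ℕ) := by
    intro i j h
    exact congrArg (fun z : Fin n => (σ z : ℕ)) (Fin.val_injective h)
  -- convert the cardinalities to double sums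
  have hInvCard : (univ.filter fun p : Fin n × Fin n => p.1 < p.2 ∧ σ p.2 < σ p.1).card
      = ∑ i : Fin n, ∑ j : Fin n, if i < j ∧ σ j < σ i then (1:ℕ) else 0 := by
    rw [Finset.card_filter, Fintype.sum_prod_type]
  have hExcCard : (univ.filter fun i : Fin n => i < σ i).card
      = ∑ i : Fin n, if i < σ i then (1:ℕ) else 0 := by
    rw [Finset.card_filter]
  have hCrsCard : (univ.filter fun p : Fin n × Fin n =>
      (p.1 < p.2 ∧ p.2 < σ p.1 ∧ σ p.1 < σ p.2) ∨
        (σ p.1 < σ p.2 ∧ σ p.2 ≤ p.1 ∧ p.1 < p.2)).card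
      = ∑ i : Fin n, ∑ j : Fin n,
          if (i < j ∧ j < σ i ∧ σ i < σ j) ∨ (σ i < σ j ∧ σ j ≤ i ∧ i < j) then (1:ℕ) else 0 := by
    rw [Finset.card_filter, Fintype.sum_prod_type]
  have hNesCard : (univ.filter fun p : Fin n × Fin n =>
      (p.1 < p.2 ∧ p.2 < σ p.2 ∧ σ p.2 < σ p.1) ∨
        (σ p.2 < σ p.1 ∧ σ p.1 ≤ p.1 ∧ p.1 < p.2)).card
      = ∑ i : Fin n, ∑ j : Fin n,
          if (i < j ∧ j < σ j ∧ σ j < σ i) ∨ (σ j < σ i ∧ σ i ≤ i ∧ i < j) then (1:ℕ) else 0 := by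
    rw [Finset.card_filter, Fintype.sum_prod_type]
  rw [hInvCard, hExcCard, hCrsCard, hNesCard]
  -- (1) partition of the inversions
  have hInv : (∑ i : Fin n, ∑ j : Fin n, if i < j ∧ σ j < σ i then (1:ℕ) else 0)
      = (∑ i : Fin n, ∑ j : Fin n,
          if (i < j ∧ j < σ j ∧ σ j < σ i) ∨ (σ j < σ i ∧ σ i ≤ i ∧ i < j) then (1:ℕ) else 0)
        + ((∑ i : Fin n, ∑ j : Fin n, if σ j ≤ i ∧ i < σ i ∧ σ i ≤ j then (1:ℕ) else 0)
        + ((∑ i : Fin n, ∑ j : Fin n, if σ j ≤ i ∧ i < j ∧ j < σ i then (1:ℕ) else 0)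
        + ((∑ i : Fin n, ∑ j : Fin n, if i < σ j ∧ σ j ≤ j ∧ j < σ i then (1:ℕ) else 0)
        + (∑ i : Fin n, ∑ j : Fin n, if i < σ j ∧ σ j < σ i ∧ σ i ≤ j then (1:ℕ) else 0)))) := by
    rw [← sum2_add, ← sum2_add, ← sum2_add, ← sum2_add]
    refine sum2_congr fun i j => ?_
    simp only [Fin.lt_def, Fin.le_def]
    split_ifs <;> omega
  -- (2) crossings + nestings = N1 + N2
  have hCN : (∑ i : Fin n, ∑ j : Fin n,
        if (i < j ∧ j < σ i ∧ σ i < σ j) ∨ (σ i < σ j ∧ σ j ≤ i ∧ i < j) then (1:ℕ) else 0)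
      + (∑ i : Fin n, ∑ j : Fin n,
        if (i < j ∧ j < σ j ∧ σ j < σ i) ∨ (σ j < σ i ∧ σ i ≤ i ∧ i < j) then (1:ℕ) else 0)
      = (∑ i : Fin n, ∑ j : Fin n, if σ i ≤ i ∧ σ j ≤ i ∧ i < j then (1:ℕ) else 0)
        + ∑ i : Fin n, ∑ j : Fin n, if j < σ j ∧ i < j ∧ j < σ i then (1:ℕ) else 0 := by
    rw [← sum2_add, ← sum2_add]
    refine sum2_congr fun i j => ?_
    have e1 := inj1 i j
    have e2 := inj2 i j
    simp only [Fin.lt_def, Fin.le_def]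
    split_ifs <;> omega
  -- (3) p1 + p2 = DD
  have hA : (∑ i : Fin n, ∑ j : Fin n, if σ j ≤ i ∧ i < σ i ∧ σ i ≤ j then (1:ℕ) else 0)
      + (∑ i : Fin n, ∑ j : Fin n, if σ j ≤ i ∧ i < j ∧ j < σ i then (1:ℕ) else 0)
      = ∑ i : Fin n, ∑ j : Fin n, if i < σ i ∧ σ j ≤ i ∧ i < j then (1:ℕ) else 0 := by
    rw [← sum2_add]
    refine sum2_congr fun i j => ?_
    simp only [Fin.lt_def, Fin.le_def]
    split_ifs <;> omega
  -- (4) p1 + p4 = EE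
  have hB : (∑ i : Fin n, ∑ j : Fin n, if σ j ≤ i ∧ i < σ i ∧ σ i ≤ j then (1:ℕ) else 0)
      + (∑ i : Fin n, ∑ j : Fin n, if i < σ j ∧ σ j < σ i ∧ σ i ≤ j then (1:ℕ) else 0)
      = ∑ i : Fin n, ∑ j : Fin n, if i < σ i ∧ σ j < σ i ∧ σ i ≤ j then (1:ℕ) else 0 := by
    rw [← sum2_add]
    refine sum2_congr fun i j => ?_
    simp only [Fin.lt_def, Fin.le_def]
    split_ifs <;> omega
  -- (5) p2 + p3 = Q2
  have hq : (∑ i : Fin n, ∑ j : Fin n, if σ j ≤ i ∧ i < j ∧ j < σ i then (1:ℕ) else 0)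
      + (∑ i : Fin n, ∑ j : Fin n, if i < σ j ∧ σ j ≤ j ∧ j < σ i then (1:ℕ) else 0)
      = ∑ i : Fin n, ∑ j : Fin n, if σ j ≤ j ∧ i < j ∧ j < σ i then (1:ℕ) else 0 := by
    rw [← sum2_add]
    refine sum2_congr fun i j => ?_
    simp only [Fin.lt_def, Fin.le_def]
    split_ifs <;> omega
  -- (6) DD = DD2 (balance per i)
  have hDDa : (∑ i : Fin n, ∑ j : Fin n, if i < σ i ∧ σ j ≤ i ∧ i < j then (1:ℕ) else 0)
      = ∑ i : Fin n, ∑ j : Fin n, if i < σ i ∧ j ≤ i ∧ i < σ j then (1:ℕ) else 0 := by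
    refine Finset.sum_congr rfl fun i _ => ?_
    rw [sum_gate, bal_le σ i]
    exact (sum_gate _ _).symm
  -- (7) DD2 = W + exc
  have hDDb : (∑ i : Fin n, ∑ j : Fin n, if i < σ i ∧ j ≤ i ∧ i < σ j then (1:ℕ) else 0)
      = (∑ i : Fin n, ∑ j : Fin n, if i < σ i ∧ j < i ∧ i < σ j then (1:ℕ) else 0)
        + ∑ i : Fin n, if i < σ i then (1:ℕ) else 0 := by
    have key : ∀ i j : Fin n, (if i < σ i ∧ j ≤ i ∧ i < σ j then (1:ℕ) else 0)
        = (if i < σ i ∧ j < i ∧ i < σ j then (1:ℕ) else 0)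
          + (if j = i ∧ i < σ i then (1:ℕ) else 0) := by
      intro i j
      have e1 := inj1 i j
      have e2 := inj2 i j
      simp only [Fin.lt_def, Fin.le_def, Fin.ext_iff]
      split_ifs <;> omega
    rw [sum2_congr key, sum2_add]
    congr 1
    exact Finset.sum_congr rfl fun i _ => sum_diag i _
  -- (8) W = N2 (swap)
  have hWN2 : (∑ i : Fin n, ∑ j : Fin n, if i < σ i ∧ j < i ∧ i < σ j then (1:ℕ) else 0)
      = ∑ i : Fin n, ∑ j : Fin n, if j < σ j ∧ i < j ∧ j < σ i then (1:ℕ) else 0 := by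
    rw [Finset.sum_comm]
  -- (9) Q2 = Q2s (swap)
  have hQa : (∑ i : Fin n, ∑ j : Fin n, if σ j ≤ j ∧ i < j ∧ j < σ i then (1:ℕ) else 0)
      = ∑ i : Fin n, ∑ j : Fin n, if σ i ≤ i ∧ j < i ∧ i < σ j then (1:ℕ) else 0 := by
    rw [Finset.sum_comm]
  -- (10) Q2s = Q2t
  have hQb : (∑ i : Fin n, ∑ j : Fin n, if σ i ≤ i ∧ j < i ∧ i < σ j then (1:ℕ) else 0)
      = ∑ i : Fin n, ∑ j : Fin n, if σ i ≤ i ∧ j ≤ i ∧ i < σ j then (1:ℕ) else 0 := by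
    refine sum2_congr fun i j => ?_
    have e1 := inj1 i j
    have e2 := inj2 i j
    simp only [Fin.lt_def, Fin.le_def]
    split_ifs <;> omega
  -- (11) Q2t = N1 (balance per i)
  have hQc : (∑ i : Fin n, ∑ j : Fin n, if σ i ≤ i ∧ j ≤ i ∧ i < σ j then (1:ℕ) else 0)
      = ∑ i : Fin n, ∑ j : Fin n, if σ i ≤ i ∧ σ j ≤ i ∧ i < j then (1:ℕ) else 0 := by
    refine Finset.sum_congr rfl fun i _ => ?_
    rw [sum_gate, ← bal_le σ i]
    exact (sum_gate _ _).symm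
  -- (12) EE = EE2 (balance per i at value σ i)
  have hEEa : (∑ i : Fin n, ∑ j : Fin n, if i < σ i ∧ σ j < σ i ∧ σ i ≤ j then (1:ℕ) else 0)
      = ∑ i : Fin n, ∑ j : Fin n, if i < σ i ∧ j < σ i ∧ σ i ≤ σ j then (1:ℕ) else 0 := by
    refine Finset.sum_congr rfl fun i _ => ?_
    rw [sum_gate, bal_lt σ (σ i)]
    exact (sum_gate _ _).symm
  -- (13) EE2 = V + exc
  have hEEb : (∑ i : Fin n, ∑ j : Fin n, if i < σ i ∧ j < σ i ∧ σ i ≤ σ j then (1:ℕ) else 0)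
      = (∑ i : Fin n, ∑ j : Fin n, if i < σ i ∧ j < σ i ∧ σ i < σ j then (1:ℕ) else 0)
        + ∑ i : Fin n, if i < σ i then (1:ℕ) else 0 := by
    have key : ∀ i j : Fin n, (if i < σ i ∧ j < σ i ∧ σ i ≤ σ j then (1:ℕ) else 0)
        = (if i < σ i ∧ j < σ i ∧ σ i < σ j then (1:ℕ) else 0)
          + (if j = i ∧ i < σ i then (1:ℕ) else 0) := by
      intro i j
      have e1 := inj1 i j
      have e2 := inj2 i j
      simp only [Fin.lt_def, Fin.le_def, Fin.ext_iff]
      split_ifs <;> omega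
    rw [sum2_congr key, sum2_add]
    congr 1
    exact Finset.sum_congr rfl fun i _ => sum_diag i _
  -- (14) V = X1 + X2
  have hVX : (∑ i : Fin n, ∑ j : Fin n, if i < σ i ∧ j < σ i ∧ σ i < σ j then (1:ℕ) else 0)
      = (∑ i : Fin n, ∑ j : Fin n, if j < i ∧ i < σ i ∧ σ i < σ j then (1:ℕ) else 0)
        + ∑ i : Fin n, ∑ j : Fin n, if i < j ∧ j < σ i ∧ σ i < σ j then (1:ℕ) else 0 := by
    rw [← sum2_add]
    refine sum2_congr fun i j => ?_
    have e1 := inj1 i j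
    have e2 := inj2 i j
    simp only [Fin.lt_def, Fin.le_def]
    split_ifs <;> omega
  -- (15) W = X1 + X2'
  have hWX : (∑ i : Fin n, ∑ j : Fin n, if i < σ i ∧ j < i ∧ i < σ j then (1:ℕ) else 0)
      = (∑ i : Fin n, ∑ j : Fin n, if j < i ∧ i < σ i ∧ σ i < σ j then (1:ℕ) else 0)
        + ∑ i : Fin n, ∑ j : Fin n, if j < i ∧ i < σ j ∧ σ j < σ i then (1:ℕ) else 0 := by
    rw [← sum2_add]
    refine sum2_congr fun i j => ?_
    have e1 := inj1 i j
    have e2 := inj2 i j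
    simp only [Fin.lt_def, Fin.le_def]
    split_ifs <;> omega
  -- (16) X2 = X2' (swap)
  have hXX : (∑ i : Fin n, ∑ j : Fin n, if i < j ∧ j < σ i ∧ σ i < σ j then (1:ℕ) else 0)
      = ∑ i : Fin n, ∑ j : Fin n, if j < i ∧ i < σ j ∧ σ j < σ i then (1:ℕ) else 0 := by
    rw [Finset.sum_comm]
  omega
end

section
/- Every 3412-avoiding involution has zero crossings: if σ ∈ S_n is an involution avoiding the pattern 3412, then there is no pair (i,j) with i < j < σ(i) < σ(j) nor with σ(i) < σ(j) ≤ i < j. -/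
/-- Every 3412-avoiding involution has no crossing. -/
theorem no_crossing_of_3412_avoiding_involution (n : ℕ) (σ : Equiv.Perm (Fin n))
    (hinv : ∀ x, σ (σ x) = x)
    (havoid : ¬ ∃ i j k l : Fin n,
      i < j ∧ j < k ∧ k < l ∧ σ k < σ l ∧ σ l < σ i ∧ σ i < σ j) :
    ∀ i j : Fin n,
      ¬ ((i < j ∧ j < σ i ∧ σ i < σ j) ∨ (σ i < σ j ∧ σ j ≤ i ∧ i < j)) := by
  intro i j h
  apply havoid
  rcases h with ⟨h1, h2, h3⟩ | ⟨h1, h2, h3⟩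
  · exact ⟨i, j, σ i, σ j, h1, h2, h3, by rw [hinv, hinv]; exact h1,
      by rw [hinv]; exact h2, h3⟩
  · have hlt : σ j < i := by
      rcases lt_or_eq_of_le h2 with h | h
      · exact h
      · exfalso
        have : σ i = j := by rw [← h, hinv]
        rw [this, h] at h1
        exact absurd h3 (not_lt.2 h1.le)
    exact ⟨σ i, σ j, i, j, h1, hlt, h3, h1, by rw [hinv]; exact hlt,
      by rw [hinv, hinv]; exact h3⟩
end

section
/- Define the double-indexed family H_{n,i} of polynomials in q by H_{0,0} = 1, H_{n,i} = 0 if i < 0 or i > n, and H_{n,i} = q^{i-1} H_{n-1,i-1} + q^i H_{n-1,i} + H_{n-1,i+1} otherwise. Then for all n ≥ 1 and 1 ≤ i ≤ n, H_{n,i} = q^{i-1} ( H_{n-1,i-1} + Σ_{k=i-1}^{n-2} q^{1+k} H_{k,i-1} H_{n-1-k,0} ). -/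
open Polynomial

/-- For the Stieltjes tableau `H` with `α_i = β_i = q^(i-1)` (so `H 0 0 = 1`,
`H n i = 0` for `i > n`, and `H n i = q^(i-1)·H (n-1) (i-1) + q^i·H (n-1) i + H (n-1) (i+1)`,
where at `i = 0` the first term vanishes since `H (n-1) (-1) = 0`), we have, for all
`n ≥ 1` and `1 ≤ i ≤ n`,
`H n i = q^(i-1)·(H (n-1) (i-1) + ∑_{k=i-1}^{n-2} q^(1+k)·H k (i-1)·H (n-1-k) 0)`. -/
theorem stieltjes_tableau_recursion (H : ℕ → ℕ → Polynomial ℤ)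
    (h00 : H 0 0 = 1)
    (hhigh : ∀ n i, n < i → H n i = 0)
    (hrec : ∀ n i, 1 ≤ n → 1 ≤ i → i ≤ n →
      H n i = X ^ (i - 1) * H (n - 1) (i - 1) + X ^ i * H (n - 1) i + H (n - 1) (i + 1))
    (hrec0 : ∀ n, 1 ≤ n → H n 0 = H (n - 1) 0 + H (n - 1) 1) :
    ∀ n i, 1 ≤ n → 1 ≤ i → i ≤ n →
      H n i = X ^ (i - 1) *
        (H (n - 1) (i - 1) +
          ∑ k ∈ Finset.Ico (i - 1) (n - 1), X ^ (1 + k) * H k (i - 1) * H (n - 1 - k) 0) := by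
  have hrec' : ∀ m j, H (m + 1) (j + 1) =
      X ^ j * H m j + X ^ (j + 1) * H m (j + 1) + H m (j + 2) := by
    intro m j
    by_cases h : j ≤ m
    · have := hrec (m + 1) (j + 1) (by omega) (by omega) (by omega)
      simpa using this
    · rw [hhigh (m + 1) (j + 1) (by omega), hhigh m j (by omega),
        hhigh m (j + 1) (by omega), hhigh m (j + 2) (by omega)]
      ring
  have hrec0' : ∀ m, H (m + 1) 0 = H m 0 + H m 1 := by
    intro m; simpa using hrec0 (m + 1) (by omega)
  have key : ∀ m j, X ^ (j + 1) * H m (j + 1) + H m (j + 2) =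
      ∑ k ∈ Finset.range m, X ^ (j + 1 + k) * H k j * H (m - k) 0 := by
    intro m
    induction m with
    | zero =>
      intro j
      simp [hhigh 0 (j + 1) (by omega), hhigh 0 (j + 2) (by omega)]
    | succ m ih =>
      intro j
      rw [Finset.sum_range_succ']
      cases j with
      | zero =>
        have e1 : ∀ k ∈ Finset.range m,
            X ^ (0 + 1 + (k + 1)) * H (k + 1) 0 * H (m + 1 - (k + 1)) 0
              = X * (X ^ (0 + 1 + k) * H k 0 * H (m - k) 0)
                + X ^ (1 + 1 + k) * H k 1 * H (m - k) 0 := by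
          intro k _
          have hs : m + 1 - (k + 1) = m - k := by omega
          rw [hs, hrec0' k]
          ring
        rw [Finset.sum_congr rfl e1, Finset.sum_add_distrib, ← Finset.mul_sum,
          ← ih 0, ← ih 1]
        have hs0 : m + 1 - 0 = m + 1 := by omega
        rw [hs0, h00, hrec0' m]
        linear_combination (X : Polynomial ℤ) * hrec' m 0 + hrec' m 1
      | succ l =>
        have e1 : ∀ k ∈ Finset.range m,
            X ^ (l + 1 + 1 + (k + 1)) * H (k + 1) (l + 1) * H (m + 1 - (k + 1)) 0
              = X ^ (l + 2) * (X ^ (l + 1 + k) * H k l * H (m - k) 0)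
                + X ^ (l + 2) * (X ^ (l + 1 + 1 + k) * H k (l + 1) * H (m - k) 0)
                + X ^ (l + 2 + 1 + k) * H k (l + 2) * H (m - k) 0 := by
          intro k _
          have hs : m + 1 - (k + 1) = m - k := by omega
          rw [hs, hrec' k l]
          ring
        rw [Finset.sum_congr rfl e1, Finset.sum_add_distrib, Finset.sum_add_distrib,
          ← Finset.mul_sum, ← Finset.mul_sum, ← ih l, ← ih (l + 1), ← ih (l + 2),
          hhigh 0 (l + 1) (by omega)]
        linear_combination (X : Polynomial ℤ) ^ (l + 2) * hrec' m (l + 1) + hrec' m (l + 2)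
  intro n i hn hi hin
  obtain ⟨m, rfl⟩ : ∃ m, n = m + 1 := ⟨n - 1, by omega⟩
  obtain ⟨j, rfl⟩ : ∃ j, i = j + 1 := ⟨i - 1, by omega⟩
  simp only [Nat.add_sub_cancel]
  have t1 : X ^ j * ∑ k ∈ Finset.Ico j m, X ^ (1 + k) * H k j * H (m - k) 0
      = ∑ k ∈ Finset.range m, X ^ (j + 1 + k) * H k j * H (m - k) 0 := by
    rw [Finset.mul_sum]
    rw [Finset.sum_congr rfl
      (fun k (_ : k ∈ Finset.Ico j m) =>
        show X ^ j * (X ^ (1 + k) * H k j * H (m - k) 0)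
            = X ^ (j + 1 + k) * H k j * H (m - k) 0 by ring)]
    refine Finset.sum_subset ?_ ?_
    · intro k hk
      simp only [Finset.mem_Ico] at hk
      simp only [Finset.mem_range]
      omega
    · intro k hk hnk
      simp only [Finset.mem_range] at hk
      simp only [Finset.mem_Ico] at hnk
      rw [hhigh k j (by omega)]
      ring
  linear_combination hrec' m j + key m j - t1
end

section
/- With H_{n,i} defined by the Stieltjes tableau H_{0,0}=1, H_{n,i}=0 for i<0 or i>n, H_{n,i} = q^{i-1}H_{n-1,i-1} + q^i H_{n-1,i} + H_{n-1,i+1}, the first column satisfies H_{0,0} = 1 and, for n ≥ 1, H_{n,0} = H_{n-1,0} + Σ_{k=0}^{n-2} q^{1+k-(n-1)δ_{k,n-2}} H_{k,0} H_{n-2-k,0}, where δ is the Kronecker delta; i.e., H_{n,0} equals the q-Motzkin polynomial 𝑀̃_n(q). -/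
/-!
Let `φ_s = 1 / (1 - q^s t - q^s t² / (1 - q^(s+1) t - q^(s+1) t² / ⋯))` be the J-fraction started
at level `s`, i.e. the solution of `φ_s = 1 + q^s t φ_s (1 + t φ_(s+1))`. The column generating
functions `F_i = ∑ₙ H n i tⁿ` of the tableau satisfy `F_0 = φ_0` and `F_(j+1) = q^j t φ_(j+1) F_j`,
so `F_1 = t φ_0 φ_1`. The identity `φ_s(qt) (1 + t φ_(s+1)) = φ_(s+1) (1 + t φ_(s+2))` turns this
into `φ_0 φ_1 = φ_0 + q φ_0(qt) (φ_0 - 1)`, whose coefficients are the convolution recurrence.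

All these identities between series are proved in the same way: the differences `d_s` of the two
sides satisfy `d_s = t (a_s d_s + b_s d_(s+1))`, which forces every `d_s` to vanish.
-/

open Polynomial
open scoped PowerSeries

theorem eq_zero_of_forall_eq_X_mul {R : Type*} [CommSemiring R] {f a b : ℕ → R⟦X⟧}
    (h : ∀ s, f s = PowerSeries.X * (a s * f s + b s * f (s + 1))) (s : ℕ) : f s = 0 := by
  have hdvd : ∀ n s, (PowerSeries.X : R⟦X⟧) ^ n ∣ f s := by
    intro n
    induction n with
    | zero => simp
    | succ n ih =>
      intro s
      rw [h s, pow_succ']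
      exact mul_dvd_mul_left _
        (dvd_add (dvd_mul_of_dvd_right (ih s) _) (dvd_mul_of_dvd_right (ih (s + 1)) _))
  ext n
  simpa using PowerSeries.X_pow_dvd_iff.mp (hdvd (n + 1) s) n n.lt_succ_self

theorem rescale_C {R : Type*} [CommSemiring R] (q a : R) :
    PowerSeries.rescale q (PowerSeries.C a) = PowerSeries.C a := by
  ext (_ | n) <;> simp [PowerSeries.coeff_C]

section Motzkin

variable {R : Type*} [CommRing R] (q : R)

local notation "t" => (PowerSeries.X : R⟦X⟧)

-- Read off from `φ_s = 1 + q^s t (φ_s + t φ_s φ_(s+1))`.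
def motzkinCoeff : ℕ → ℕ → R
  | _, 0 => 1
  | s, n + 1 => q ^ s *
      (motzkinCoeff s n + ∑ k : Fin n, motzkinCoeff s k * motzkinCoeff (s + 1) (n - 1 - k))
  termination_by _ n => n
  decreasing_by all_goals omega

def motzkinSeries (s : ℕ) : R⟦X⟧ := PowerSeries.mk (motzkinCoeff q s)

theorem motzkinSeries_eq (s : ℕ) :
    motzkinSeries q s =
      1 + PowerSeries.C q ^ s * t * motzkinSeries q s * (1 + t * motzkinSeries q (s + 1)) := by
  ext (_ | n)
  · simp [motzkinSeries, motzkinCoeff]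
  rw [show PowerSeries.C q ^ s * t * motzkinSeries q s * (1 + t * motzkinSeries q (s + 1)) =
      PowerSeries.C (q ^ s) *
        (t * (motzkinSeries q s + t * (motzkinSeries q s * motzkinSeries q (s + 1)))) by
      rw [map_pow]; ring,
    map_add, PowerSeries.coeff_one, if_neg n.succ_ne_zero, zero_add, PowerSeries.coeff_C_mul,
    PowerSeries.coeff_succ_X_mul, map_add]
  simp only [motzkinSeries, PowerSeries.coeff_mk, motzkinCoeff]
  congr 2
  rcases n with _ | m
  · simp
  rw [PowerSeries.coeff_succ_X_mul, PowerSeries.coeff_mul,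
    Finset.Nat.sum_antidiagonal_eq_sum_range_succ_mk,
    Fin.sum_univ_eq_sum_range
      (fun k => motzkinCoeff q s k * motzkinCoeff q (s + 1) (m + 1 - 1 - k))]
  simp

theorem rescale_motzkinSeries_eq (s : ℕ) :
    PowerSeries.rescale q (motzkinSeries q s) =
      1 + PowerSeries.C q ^ (s + 1) * t * PowerSeries.rescale q (motzkinSeries q s) *
        (1 + PowerSeries.C q * t * PowerSeries.rescale q (motzkinSeries q (s + 1))) := by
  conv_lhs => rw [motzkinSeries_eq]
  simp only [map_add, map_mul, map_pow, map_one, rescale_C, PowerSeries.rescale_X]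
  ring

theorem rescale_motzkinSeries_mul_eq (s : ℕ) :
    PowerSeries.rescale q (motzkinSeries q s) * (1 + t * motzkinSeries q (s + 1)) =
      motzkinSeries q (s + 1) * (1 + t * motzkinSeries q (s + 2)) := by
  rw [eq_comm, ← sub_eq_zero]
  refine eq_zero_of_forall_eq_X_mul
    (f := fun s => motzkinSeries q (s + 1) * (1 + t * motzkinSeries q (s + 2)) -
      PowerSeries.rescale q (motzkinSeries q s) * (1 + t * motzkinSeries q (s + 1)))
    (a := fun s => PowerSeries.C q ^ (s + 1) *
      (1 + PowerSeries.C q * t * PowerSeries.rescale q (motzkinSeries q (s + 1))))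
    (b := fun s => PowerSeries.C q ^ (s + 2) * t * motzkinSeries q (s + 1)) (fun s => ?_) s
  linear_combination motzkinSeries_eq q (s + 1) +
    t * motzkinSeries q (s + 1) * motzkinSeries_eq q (s + 2) -
    (1 + t * motzkinSeries q (s + 1)) * rescale_motzkinSeries_eq q s

theorem motzkinSeries_mul_succ (s : ℕ) :
    motzkinSeries q s * motzkinSeries q (s + 1) = motzkinSeries q s +
      PowerSeries.C q * PowerSeries.rescale q (motzkinSeries q s) * (motzkinSeries q s - 1) := by
  linear_combination motzkinSeries q s * motzkinSeries_eq q (s + 1) -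
    PowerSeries.C q ^ (s + 1) * t * motzkinSeries q s * rescale_motzkinSeries_mul_eq q s -
    PowerSeries.C q * PowerSeries.rescale q (motzkinSeries q s) * motzkinSeries_eq q s

theorem coeff_add_C_mul_rescale_mul_sub_one (f : R⟦X⟧) (hf : PowerSeries.constantCoeff f = 1)
    (r : ℕ) :
    PowerSeries.coeff r (f + PowerSeries.C q * PowerSeries.rescale q f * (f - 1)) =
      PowerSeries.coeff r f + ∑ k ∈ Finset.range r,
        q ^ (k + 1) * PowerSeries.coeff k f * PowerSeries.coeff (r - k) f := by
  rw [map_add, mul_assoc, PowerSeries.coeff_C_mul, PowerSeries.coeff_mul,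
    Finset.Nat.sum_antidiagonal_eq_sum_range_succ_mk, Finset.sum_range_succ]
  simp only [Nat.sub_self, map_sub, PowerSeries.coeff_zero_eq_constantCoeff_apply, hf,
    PowerSeries.coeff_one, if_true, sub_self, mul_zero, add_zero, PowerSeries.coeff_rescale,
    Finset.mul_sum]
  congr 1
  refine Finset.sum_congr rfl fun k hk => ?_
  rw [if_neg (Nat.sub_ne_zero_of_lt (Finset.mem_range.mp hk))]
  ring

end Motzkin

section Tableau

variable {R : Type*} [CommRing R]

structure IsStieltjesTableau (q : R) (H : ℕ → ℕ → R) : Prop where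
  zero_zero : H 0 0 = 1
  eq_zero_of_lt : ∀ n i, n < i → H n i = 0
  succ_zero : ∀ n, H (n + 1) 0 = H n 0 + H n 1
  succ_succ : ∀ n i, i ≤ n →
    H (n + 1) (i + 1) = q ^ i * H n i + q ^ (i + 1) * H n (i + 1) + H n (i + 2)

def tableauColumn (H : ℕ → ℕ → R) (i : ℕ) : R⟦X⟧ := PowerSeries.mk fun n => H n i

local notation "t" => (PowerSeries.X : R⟦X⟧)

namespace IsStieltjesTableau

variable {q : R} {H : ℕ → ℕ → R}

theorem tableauColumn_zero_eq (hH : IsStieltjesTableau q H) :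
    tableauColumn H 0 = 1 + t * tableauColumn H 0 + t * tableauColumn H 1 := by
  ext (_ | n)
  · simp [tableauColumn, hH.zero_zero]
  · simp [tableauColumn, hH.succ_zero, PowerSeries.coeff_succ_X_mul]

theorem tableauColumn_succ_eq (hH : IsStieltjesTableau q H) (j : ℕ) :
    tableauColumn H (j + 1) = PowerSeries.C q ^ j * t * tableauColumn H j +
      PowerSeries.C q ^ (j + 1) * t * tableauColumn H (j + 1) + t * tableauColumn H (j + 2) := by
  ext (_ | n)
  · simp [tableauColumn, hH.eq_zero_of_lt 0 (j + 1) j.succ_pos]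
  simp only [tableauColumn, ← map_pow, mul_assoc, map_add, PowerSeries.coeff_C_mul,
    PowerSeries.coeff_succ_X_mul, PowerSeries.coeff_mk]
  rcases le_or_gt j n with hjn | hnj
  · exact hH.succ_succ n j hjn
  · simp [hH.eq_zero_of_lt _ _ hnj, hH.eq_zero_of_lt n (j + 1) (by omega),
      hH.eq_zero_of_lt n (j + 2) (by omega), hH.eq_zero_of_lt (n + 1) (j + 1) (by omega)]

theorem tableauColumn_succ_eq_mul (hH : IsStieltjesTableau q H) (j : ℕ) :
    tableauColumn H (j + 1) =
      PowerSeries.C q ^ j * t * motzkinSeries q (j + 1) * tableauColumn H j := by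
  rw [← sub_eq_zero]
  refine eq_zero_of_forall_eq_X_mul
    (f := fun j => tableauColumn H (j + 1) -
      PowerSeries.C q ^ j * t * motzkinSeries q (j + 1) * tableauColumn H j)
    (a := fun j => PowerSeries.C q ^ (j + 1) * (1 + t * motzkinSeries q (j + 2)))
    (b := fun _ => 1) (fun j => ?_) j
  linear_combination hH.tableauColumn_succ_eq j -
    PowerSeries.C q ^ j * t * tableauColumn H j * motzkinSeries_eq q (j + 1)

theorem tableauColumn_zero_eq_motzkinSeries (hH : IsStieltjesTableau q H) :
    tableauColumn H 0 = motzkinSeries q 0 := by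
  rw [← sub_eq_zero]
  refine eq_zero_of_forall_eq_X_mul (f := fun _ => tableauColumn H 0 - motzkinSeries q 0)
    (a := fun _ => 1 + t * motzkinSeries q 1) (b := fun _ => 0) (fun _ => ?_) 0
  linear_combination hH.tableauColumn_zero_eq - motzkinSeries_eq q 0 +
    t * hH.tableauColumn_succ_eq_mul 0

theorem succ_one (hH : IsStieltjesTableau q H) (r : ℕ) :
    H (r + 1) 1 = H r 0 + ∑ k ∈ Finset.range r, q ^ (k + 1) * H k 0 * H (r - k) 0 := by
  have hcol : tableauColumn H 1 = t * (tableauColumn H 0 + PowerSeries.C q *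
      PowerSeries.rescale q (tableauColumn H 0) * (tableauColumn H 0 - 1)) := by
    rw [hH.tableauColumn_succ_eq_mul 0, hH.tableauColumn_zero_eq_motzkinSeries,
      ← motzkinSeries_mul_succ]
    ring
  have hcoeff := congrArg (PowerSeries.coeff (r + 1)) hcol
  rw [PowerSeries.coeff_succ_X_mul, coeff_add_C_mul_rescale_mul_sub_one] at hcoeff
  · simpa [tableauColumn] using hcoeff
  · simp [tableauColumn, hH.zero_zero]

end IsStieltjesTableau

end Tableau

/-- The first column of the Stieltjes tableau `H` (with `α_i = β_i = q^(i-1)`) satisfies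
`H 0 0 = 1` and, for `n ≥ 1`,
`H n 0 = H (n-1) 0 + ∑_{k=0}^{n-2} q^(1+k-(n-1)·δ_{k,n-2}) · H k 0 · H (n-2-k) 0`;
hence `H n 0` equals the q-Motzkin polynomial `M̃ n`. -/
theorem stieltjes_first_column_eq_qMotzkin (H : ℕ → ℕ → Polynomial ℤ)
    (h00 : H 0 0 = 1)
    (hhigh : ∀ n i, n < i → H n i = 0)
    (hrec : ∀ n i, 1 ≤ n → 1 ≤ i → i ≤ n →
      H n i = X ^ (i - 1) * H (n - 1) (i - 1) + X ^ i * H (n - 1) i + H (n - 1) (i + 1))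
    (hrec0 : ∀ n, 1 ≤ n → H n 0 = H (n - 1) 0 + H (n - 1) 1)
    (Mt : ℕ → Polynomial ℤ) (ht0 : Mt 0 = 1)
    (htrec : ∀ n, 1 ≤ n →
      Mt n = Mt (n - 1) +
        ∑ k ∈ Finset.range (n - 1),
          X ^ (k + 1 - (n - 1) * (if k = n - 2 then 1 else 0)) * Mt k * Mt (n - 2 - k)) :
    (∀ n, 1 ≤ n →
      H n 0 = H (n - 1) 0 +
        ∑ k ∈ Finset.range (n - 1),
          X ^ (1 + k - (n - 1) * (if k = n - 2 then 1 else 0)) * H k 0 * H (n - 2 - k) 0) ∧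
      ∀ n, H n 0 = Mt n := by
  have hH : IsStieltjesTableau X H :=
    ⟨h00, hhigh, fun n => by simpa using hrec0 (n + 1) n.succ_pos,
      fun n i hi => by simpa using hrec (n + 1) (i + 1) (by omega) (by omega) (by omega)⟩
  have first_column : ∀ n, 1 ≤ n →
      H n 0 = H (n - 1) 0 +
        ∑ k ∈ Finset.range (n - 1),
          X ^ (1 + k - (n - 1) * (if k = n - 2 then 1 else 0)) * H k 0 * H (n - 2 - k) 0 := by
    rintro (_ | _ | r) hn
    · omega
    · simp [hH.succ_zero, hhigh]
    rw [hH.succ_zero, hH.succ_one, show r + 1 + 1 - 2 = r by omega, Nat.add_sub_cancel,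
      Finset.sum_range_succ, if_pos rfl, show 1 + r - (r + 1) * 1 = 0 by omega, Nat.sub_self,
      h00, pow_zero, one_mul, mul_one, add_comm (H r 0)]
    refine congrArg (fun s => H (r + 1) 0 + (s + H r 0)) (Finset.sum_congr rfl fun k hk => ?_)
    rw [if_neg (Finset.mem_range.mp hk).ne, mul_zero, Nat.sub_zero, add_comm 1 k]
  refine ⟨first_column, fun n => ?_⟩
  induction n using Nat.strong_induction_on with
  | _ n ih =>
    rcases n with _ | m
    · rw [h00, ht0]
    rw [first_column (m + 1) m.succ_pos, htrec (m + 1) m.succ_pos, Nat.add_sub_cancel,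
      ih m m.lt_succ_self]
    refine congrArg _ (Finset.sum_congr rfl fun k hk => ?_)
    have hk : k < m := Finset.mem_range.mp hk
    rw [ih k (by omega), ih (m + 1 - 2 - k) (by omega), Nat.add_comm 1 k]
end
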